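/- arXiv:2204.06083 — 4 statements merged into one kernel-verified Lean document; each statement's English description precedes it below -/
import Mathlib

section
/- Let n ≥ 3 be an integer and let a, b be real numbers satisfying a > (n−2)/(n−1), b > (n−2)/(n−1), and a > ((n−2)b − (n−3)) / ((n−1)b − (n−2)). Then the n×n matrix D^(n)(a,b) is symmetric positive definite. -/
/-!
Write `u = x 0`, `v = x (n - 1)` and `m = n - 2`. The quadratic form of `D^(n)(a, b)` is
`(a - 1) u² + (b - 1) v² + ∑ₖ (x (k + 1) - x k)²`. The `m + 1` consecutive differences add up
to `v - u`, so by Cauchy–Schwarz their squares add up to at least `(v - u)² / (m + 1)`. Hence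
`(m + 1) xᵀ D x ≥ A u² - 2 u v + B v²` with `A = (m + 1) a - m`, `B = (m + 1) b - m`, and the
hypotheses say exactly that `A > 0`, `B > 0` and `A B > 1`, i.e. that this binary form is
positive definite. When `u = v = 0` the form reduces to the sum of squared differences, which
vanishes only for constant, hence zero, `x`.
-/

/-- The `n × n` tridiagonal matrix with diagonal `(a, 2, 2, …, 2, b)`
(first diagonal entry `a`, last diagonal entry `b`, all other diagonal entries `2`),
sub- and super-diagonal entries `-1`, and all remaining entries `0`. -/
def Dmat (n : ℕ) (a b : ℝ) : Matrix (Fin n) (Fin n) ℝ :=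
  Matrix.of fun i j =>
    if i = j then (if i.val = 0 then a else if i.val = n - 1 then b else 2)
    else if i.val + 1 = j.val ∨ j.val + 1 = i.val then -1 else 0

open Matrix Finset

theorem Fin.sum_univ_succ_sub {M : Type*} [AddCommGroup M] {m : ℕ} (f : Fin (m + 2) → M) :
    ∑ i : Fin (m + 1), (f i.succ - f i.castSucc) = f (Fin.last (m + 1)) - f 0 := by
  rw [← Fin.succ_last, ← Fin.sum_Iic_sub, ← Fin.top_eq_last, Finset.Iic_top]

theorem Fin.sum_sum_ite_val_add_one_eq {R : Type*} [CommRing R] {m : ℕ} (x : Fin (m + 1) → R) :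
    ∑ i, ∑ j, (if i.val + 1 = j.val then x i * x j else 0) =
      ∑ k : Fin m, x k.castSucc * x k.succ := by
  rw [Fin.sum_univ_castSucc]
  simp only [Fin.val_castSucc, ← Fin.val_succ, Fin.val_inj, sum_ite_eq, mem_univ, if_true,
    Fin.val_last]
  rw [sum_eq_zero fun j _ => if_neg (by have := j.isLt; omega), add_zero]

theorem Fin.apply_eq_apply_zero_of_forall_succ_eq {α : Type*} {m : ℕ} {x : Fin (m + 1) → α}
    (h : ∀ k : Fin m, x k.succ = x k.castSucc) (i : Fin (m + 1)) : x i = x 0 := by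
  induction i using Fin.induction with
  | zero => rfl
  | succ k ih => rw [h k, ih]

theorem binary_quadratic_pos {A B γ u v : ℝ} (hA : 0 < A) (hAB : γ ^ 2 < A * B)
    (huv : u ≠ 0 ∨ v ≠ 0) : 0 < A * u ^ 2 - 2 * γ * u * v + B * v ^ 2 := by
  rcases eq_or_ne v 0 with rfl | hv
  · simpa using mul_pos hA (pow_two_pos_of_ne_zero (huv.resolve_right (not_not.mpr rfl)))
  · have key : A * (A * u ^ 2 - 2 * γ * u * v + B * v ^ 2)
        = (A * u - γ * v) ^ 2 + (A * B - γ ^ 2) * v ^ 2 := by ring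
    have : 0 < (A * B - γ ^ 2) * v ^ 2 := mul_pos (by linarith) (pow_two_pos_of_ne_zero hv)
    exact pos_of_mul_pos_right (key ▸ by positivity) hA.le

theorem Dmat_apply (n : ℕ) (a b : ℝ) (i j : Fin n) :
    Dmat n a b i j =
      (if i = j then (if i.val = 0 then a else if i.val = n - 1 then b else 2) else 0)
        - (if i.val + 1 = j.val then 1 else 0) - (if j.val + 1 = i.val then 1 else 0) := by
  rw [Dmat, of_apply]
  by_cases h : i = j
  · subst h
    simp
  · simp only [if_neg h, zero_sub]
    split_ifs <;> first | (exfalso; omega) | ring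

theorem Dmat_isSymm (n : ℕ) (a b : ℝ) : (Dmat n a b).IsSymm := by
  refine IsSymm.ext fun i j => ?_
  rw [Dmat_apply, Dmat_apply]
  by_cases h : i = j
  · subst h
    rfl
  · rw [if_neg h, if_neg (Ne.symm h)]
    ring

theorem dotProduct_Dmat_mulVec_eq_diag_sub_offDiag (n : ℕ) (a b : ℝ) (x : Fin n → ℝ) :
    x ⬝ᵥ (Dmat n a b *ᵥ x) =
      ∑ i, (if i.val = 0 then a else if i.val = n - 1 then b else 2) * x i ^ 2
        - 2 * ∑ i, ∑ j, (if i.val + 1 = j.val then x i * x j else 0) := by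
  have hsym : ∑ i, ∑ j, (if j.val + 1 = i.val then x i * x j else 0)
      = ∑ i, ∑ j, (if i.val + 1 = j.val then x i * x j else 0) := by
    rw [sum_comm]
    simp only [mul_comm]
  simp only [dotProduct, mulVec, Dmat_apply, sub_mul, ite_mul, one_mul, zero_mul, sum_sub_distrib,
    mul_sub, mul_sum, sum_ite_eq, mem_univ, if_true, mul_ite, mul_zero, hsym]
  rw [sub_sub, ← two_mul, mul_sum]
  simp only [mul_sum, mul_ite, mul_zero]
  congr 1
  exact sum_congr rfl fun i _ => by split_ifs <;> ring

theorem dotProduct_Dmat_mulVec (m : ℕ) (a b : ℝ) (x : Fin (m + 2) → ℝ) :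
    x ⬝ᵥ (Dmat (m + 2) a b *ᵥ x) = (a - 1) * x 0 ^ 2 + (b - 1) * x (Fin.last _) ^ 2
      + ∑ k : Fin (m + 1), (x k.succ - x k.castSucc) ^ 2 := by
  have hdiag :
      ∑ i : Fin (m + 2), (if i.val = 0 then a else if i.val = m + 2 - 1 then b else 2) * x i ^ 2
        = (a - 2) * x 0 ^ 2 + (b - 2) * x (Fin.last _) ^ 2 + 2 * ∑ i, x i ^ 2 := by
    rw [mul_sum, ← Fintype.sum_ite_eq' (0 : Fin (m + 2)) (fun i => (a - 2) * x i ^ 2),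
      ← Fintype.sum_ite_eq' (Fin.last (m + 1)) (fun i => (b - 2) * x i ^ 2), ← sum_add_distrib,
      ← sum_add_distrib]
    refine sum_congr rfl fun i _ => ?_
    have hlast : i.val = m + 2 - 1 ↔ i = Fin.last _ := by
      rw [Fin.ext_iff, Fin.val_last]
      omega
    simp only [Fin.val_eq_zero_iff, hlast]
    split_ifs with h0 hl <;> subst_vars <;> first | ring1 | simp at hl
  have hdiff : ∑ k : Fin (m + 1), (x k.succ - x k.castSucc) ^ 2
      = ∑ k : Fin (m + 1), x k.succ ^ 2 + ∑ k : Fin (m + 1), x k.castSucc ^ 2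
        - 2 * ∑ k : Fin (m + 1), x k.castSucc * x k.succ := by
    rw [mul_sum, ← sum_add_distrib, ← sum_sub_distrib]
    exact sum_congr rfl fun k _ => by ring
  rw [dotProduct_Dmat_mulVec_eq_diag_sub_offDiag, Fin.sum_sum_ite_val_add_one_eq, hdiag, hdiff]
  linarith [Fin.sum_univ_succ (fun i => x i ^ 2), Fin.sum_univ_castSucc (fun i => x i ^ 2)]

theorem sq_last_sub_zero_le_mul_sum_sq (m : ℕ) (x : Fin (m + 2) → ℝ) :
    (x (Fin.last _) - x 0) ^ 2
      ≤ (m + 1) * ∑ k : Fin (m + 1), (x k.succ - x k.castSucc) ^ 2 := by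
  rw [← Fin.sum_univ_succ_sub]
  simpa using sq_sum_le_card_mul_sum_sq (s := univ)
    (f := fun k : Fin (m + 1) => x k.succ - x k.castSucc)

theorem sum_sq_succ_sub_castSucc_pos {m : ℕ} {x : Fin (m + 2) → ℝ} (hx : x ≠ 0)
    (h0 : x 0 = 0) :
    0 < ∑ k : Fin (m + 1), (x k.succ - x k.castSucc) ^ 2 := by
  refine (sum_nonneg fun k _ => sq_nonneg _).lt_of_ne fun hsum => hx (funext fun i => ?_)
  have hzero := (sum_eq_zero_iff_of_nonneg fun k _ => sq_nonneg _).1 hsum.symm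
  have hconst : ∀ k : Fin (m + 1), x k.succ = x k.castSucc := fun k =>
    sub_eq_zero.1 (pow_eq_zero_iff two_ne_zero |>.1 (hzero k (mem_univ k)))
  rw [Fin.apply_eq_apply_zero_of_forall_succ_eq hconst i, h0, Pi.zero_apply]

theorem dotProduct_Dmat_mulVec_pos (m : ℕ) {a b : ℝ} (hA : 0 < (m + 1) * a - m)
    (hAB : 1 < ((m + 1) * a - m) * ((m + 1) * b - m)) {x : Fin (m + 2) → ℝ} (hx : x ≠ 0) :
    0 < x ⬝ᵥ (Dmat (m + 2) a b *ᵥ x) := by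
  rw [dotProduct_Dmat_mulVec]
  by_cases hends : x 0 = 0 ∧ x (Fin.last _) = 0
  · rw [hends.1, hends.2]
    simpa using sum_sq_succ_sub_castSucc_pos hx hends.1
  · have hform := binary_quadratic_pos (B := (m + 1) * b - m) (γ := 1) hA (by linarith)
      (not_and_or.1 hends)
    refine pos_of_mul_pos_right (a := (m + 1 : ℝ)) ?_ (by positivity)
    linear_combination hform + sq_last_sub_zero_le_mul_sum_sq m x

theorem stmt2 (n : ℕ) (hn : 3 ≤ n) (a b : ℝ)
    (ha : a > ((n : ℝ) - 2) / ((n : ℝ) - 1))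
    (hb : b > ((n : ℝ) - 2) / ((n : ℝ) - 1))
    (hab : a > (((n : ℝ) - 2) * b - ((n : ℝ) - 3)) / (((n : ℝ) - 1) * b - ((n : ℝ) - 2))) :
    (Dmat n a b).PosDef := by
  obtain ⟨m, rfl⟩ : ∃ m, n = m + 2 := ⟨n - 2, by omega⟩
  have hm : (0 : ℝ) < m + 1 := by positivity
  have h2 : ((m + 2 : ℕ) : ℝ) - 2 = m := by push_cast; ring
  have h1 : ((m + 2 : ℕ) : ℝ) - 1 = m + 1 := by push_cast; ring
  have h3 : ((m + 2 : ℕ) : ℝ) - 3 = m - 1 := by push_cast; ring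
  rw [h2, h1] at ha hb
  rw [h2, h1, h3] at hab
  have hA : 0 < (m + 1) * a - m := by linarith [(div_lt_iff₀ hm).1 ha]
  have hB : 0 < (m + 1) * b - m := by linarith [(div_lt_iff₀ hm).1 hb]
  have hAB : 1 < ((m + 1) * a - m) * ((m + 1) * b - m) := by
    linear_combination (m + 1 : ℝ) * (div_lt_iff₀ hB).1 hab
  exact .of_dotProduct_mulVec_pos (isHermitian_iff_isSymm.2 (Dmat_isSymm _ a b))
    fun x hx => by simpa using dotProduct_Dmat_mulVec_pos m hA hAB hx
end

section
/- Let n ≥ 1 be an integer and let a, b be real numbers with a > 1 and b > 1. Then the n×n matrix D^(n)(a,b) is symmetric positive definite. -/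
/-!
`Dmat n a b` is the Laplacian of the path graph on `n` vertices plus a diagonal matrix whose
entries are `≥ 0` and positive at the first vertex (`a - 1`, or `a` when `n = 1`). The quadratic
form of the Laplacian is `∑ (xᵢ - xⱼ)²` over the edges, so it vanishes only on vectors that are
constant along the connected path; the diagonal term then forces that constant to be `0`.
-/

open Matrix SimpleGraph

theorem SimpleGraph.Preconnected.posDef_lapMatrix_add_diagonal {V : Type*} [Fintype V]
    [DecidableEq V] {G : SimpleGraph V} [DecidableRel G.Adj] (hG : G.Preconnected)
    {d : V → ℝ} (hd : 0 ≤ d) {v : V} (hv : 0 < d v) :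
    (G.lapMatrix ℝ + diagonal d).PosDef := by
  refine .of_dotProduct_mulVec_pos
    ((G.isHermitian_lapMatrix (R := ℝ)).add (isHermitian_diagonal d)) fun x hx => ?_
  have hterm_nonneg : ∀ i, 0 ≤ d i * x i ^ 2 := fun i => mul_nonneg (hd i) (sq_nonneg _)
  have hdiag : x ⬝ᵥ (diagonal d *ᵥ x) = ∑ i, d i * x i ^ 2 :=
    Finset.sum_congr rfl fun i _ => by rw [mulVec_diagonal]; ring
  have hlap_nonneg : 0 ≤ x ⬝ᵥ (G.lapMatrix ℝ *ᵥ x) := by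
    simpa using (G.posSemidef_lapMatrix ℝ).dotProduct_mulVec_nonneg x
  rw [star_trivial, add_mulVec, dotProduct_add, hdiag]
  refine (add_nonneg hlap_nonneg (Finset.sum_nonneg fun i _ => hterm_nonneg i)).lt_of_ne
    fun hzero => hx ?_
  obtain ⟨hlap_zero, hdiag_zero⟩ := (add_eq_zero_iff_of_nonneg hlap_nonneg
    (Finset.sum_nonneg fun i _ => hterm_nonneg i)).1 hzero.symm
  have hconst : ∀ i j, G.Reachable i j → x i = x j :=
    (G.lapMatrix_toLinearMap₂'_apply'_eq_zero_iff_forall_reachable x).1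
      (by rwa [toLinearMap₂'_apply'])
  have hxv : x v = 0 := by
    have := (Finset.sum_eq_zero_iff_of_nonneg fun i _ => hterm_nonneg i).1 hdiag_zero v
      (Finset.mem_univ v)
    simpa [hv.ne'] using this
  exact funext fun i => (hconst i v (hG i v)).trans hxv

instance SimpleGraph.decidableRelPathGraphAdj (n : ℕ) : DecidableRel (pathGraph n).Adj :=
  fun _ _ => decidable_of_iff _ pathGraph_adj.symm

theorem SimpleGraph.degree_pathGraph {n : ℕ} (i : Fin n) :
    (pathGraph n).degree i =
      (if (i : ℕ) + 1 < n then 1 else 0) + (if 0 < (i : ℕ) then 1 else 0) := by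
  have hsplit : ∀ k : ℕ, (if (i : ℕ) + 1 = k ∨ k + 1 = i then 1 else 0)
      = (if (i : ℕ) + 1 = k then 1 else 0)
        + (if (i : ℕ) - 1 = k ∧ 0 < (i : ℕ) then 1 else 0) := by
    intro k; split_ifs <;> omega
  have h := (pathGraph n).degree_eq_sum_if_adj (R := ℕ) i
  simp only [Nat.cast_id, pathGraph_adj] at h
  rw [h, Fin.sum_univ_eq_sum_range (fun k => if (i : ℕ) + 1 = k ∨ k + 1 = i then 1 else 0),
    Finset.sum_congr rfl fun k _ => hsplit k, Finset.sum_add_distrib]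
  simp only [ite_and, Finset.sum_ite_eq, Finset.mem_range]
  split_ifs <;> omega

theorem Dmat_eq_lapMatrix_add_diagonal (n : ℕ) (a b : ℝ) :
    Dmat n a b = (pathGraph n).lapMatrix ℝ
      + diagonal fun i => Dmat n a b i i - (pathGraph n).degree i := by
  ext i j
  rcases eq_or_ne i j with rfl | hij
  · simp [lapMatrix, degMatrix]
  · simp only [Dmat, lapMatrix, degMatrix, Matrix.add_apply, Matrix.sub_apply, adjMatrix_apply,
      pathGraph_adj, of_apply, if_neg hij, diagonal_apply_ne _ hij]
    split_ifs <;> norm_num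

theorem Dmat_diag_sub_degree_nonneg {n : ℕ} {a b : ℝ} (ha : 1 ≤ a) (hb : 1 ≤ b) (i : Fin n) :
    0 ≤ Dmat n a b i i - (pathGraph n).degree i := by
  simp only [Dmat, of_apply, if_true, degree_pathGraph]
  split_ifs <;> push_cast <;> first | linarith | omega

theorem Dmat_diag_sub_degree_zero_pos {n : ℕ} (hn : 1 ≤ n) {a b : ℝ} (ha : 1 < a) :
    0 < Dmat n a b ⟨0, hn⟩ ⟨0, hn⟩ - (pathGraph n).degree ⟨0, hn⟩ := by
  simp only [Dmat, of_apply, if_true, degree_pathGraph]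
  split_ifs <;> push_cast <;> linarith

theorem stmt3 (n : ℕ) (hn : 1 ≤ n) (a b : ℝ) (ha : 1 < a) (hb : 1 < b) :
    (Dmat n a b).PosDef := by
  rw [Dmat_eq_lapMatrix_add_diagonal]
  exact (pathGraph_preconnected n).posDef_lapMatrix_add_diagonal
    (fun i => Dmat_diag_sub_degree_nonneg ha.le hb.le i) (Dmat_diag_sub_degree_zero_pos hn ha)
end

section
/- Let S ≥ 1 be an integer, and for each k = 1, …, S let n_k ≥ 1 be an integer and a_k, b_k be real numbers such that (n_k, a_k, b_k) satisfies one of the following conditions: (i) n_k = 1 and a_k > 0; (ii) n_k = 2, a_k > 0, and a_k b_k > 1; (iii) n_k ≥ 3, a_k > (n_k−2)/(n_k−1), b_k > (n_k−2)/(n_k−1), and a_k > ((n_k−2)b_k − (n_k−3)) / ((n_k−1)b_k − (n_k−2)). Then the block diagonal matrix D^line = diag(D^(n_1)(a_1,b_1), D^(n_2)(a_2,b_2), …, D^(n_S)(a_S,b_S)) is symmetric positive definite. -/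
/-!
Eliminating the first unknown (a Schur complement at the corner entry `a > 0`) writes the
quadratic form of `D^(n+1)(a, b)` as `a (x₁ - x₂/a)²` plus the form of `D^(n)(2 - 1/a, b)` in
`x₂, …`. With `α = (n-1) a - (n-2)` and `β = (n-1) b - (n-2)`, the conditions on `D^(n)(a, b)`
read `α > 0`, `αβ > 1`, and they pass from `(a, b)` in size `n + 1` to `(2 - 1/a, b)` in size
`n`, the new `α` being the old one divided by `a`. Induction on `n` ends at the `1 × 1` matrix
`(b - 1/a)`.
-/

open Matrix

namespace Matrix

section BlockDiagonal

variable {o R : Type*} {m : o → Type*} [Fintype o] [DecidableEq o] [∀ k, Fintype (m k)]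

theorem blockDiagonal'_mulVec_apply [NonUnitalNonAssocSemiring R]
    (M : ∀ k, Matrix (m k) (m k) R) (x : (Σ k, m k) → R) (k : o) (i : m k) :
    (blockDiagonal' M *ᵥ x) ⟨k, i⟩ = (M k *ᵥ fun j => x ⟨k, j⟩) i := by
  simp only [mulVec, dotProduct, Fintype.sum_sigma]
  rw [Finset.sum_eq_single k (fun k' _ hk' => by simp [blockDiagonal'_apply_ne _ _ _ hk'.symm])
    (by simp)]
  simp [blockDiagonal'_apply_eq]

theorem dotProduct_blockDiagonal'_mulVec [NonUnitalNonAssocSemiring R]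
    (M : ∀ k, Matrix (m k) (m k) R) (x y : (Σ k, m k) → R) :
    x ⬝ᵥ blockDiagonal' M *ᵥ y = ∑ k, (fun i => x ⟨k, i⟩) ⬝ᵥ M k *ᵥ fun j => y ⟨k, j⟩ := by
  simp only [dotProduct, Fintype.sum_sigma, blockDiagonal'_mulVec_apply]

theorem PosDef.blockDiagonal' [Ring R] [PartialOrder R] [StarRing R] [IsOrderedCancelAddMonoid R]
    {M : ∀ k, Matrix (m k) (m k) R} (hM : ∀ k, (M k).PosDef) :
    (Matrix.blockDiagonal' M).PosDef := by
  refine .of_dotProduct_mulVec_pos (isHermitian_blockDiagonal'_iff.2 fun k => (hM k).1)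
    fun x hx => ?_
  obtain ⟨⟨k, i⟩, hxi⟩ : ∃ p, x p ≠ 0 := Function.ne_iff.1 hx
  rw [dotProduct_blockDiagonal'_mulVec]
  exact Finset.sum_pos' (fun k _ => (hM k).posSemidef.dotProduct_mulVec_nonneg _)
    ⟨k, Finset.mem_univ _, (hM k).dotProduct_mulVec_pos fun h => hxi (congrFun h i)⟩

end BlockDiagonal

section SchurComplement

variable {K : Type*} [Field K] {k : ℕ}

def schurComplementAtZero (M : Matrix (Fin (k + 1)) (Fin (k + 1)) K) :
    Matrix (Fin k) (Fin k) K :=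
  M.submatrix Fin.succ Fin.succ - (M 0 0)⁻¹ • vecMulVec (Fin.tail (Mᵀ 0)) (Fin.tail (M 0))

theorem dotProduct_mulVec_fin_succ (M : Matrix (Fin (k + 1)) (Fin (k + 1)) K)
    (x : Fin (k + 1) → K) :
    x ⬝ᵥ M *ᵥ x = x 0 * M 0 0 * x 0 + x 0 * (Fin.tail (M 0) ⬝ᵥ Fin.tail x)
      + (Fin.tail x ⬝ᵥ Fin.tail (Mᵀ 0)) * x 0
      + Fin.tail x ⬝ᵥ M.submatrix Fin.succ Fin.succ *ᵥ Fin.tail x := by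
  simp only [dotProduct, mulVec, Fin.sum_univ_succ, Fin.tail, submatrix_apply, transpose_apply,
    mul_add, Finset.sum_add_distrib, Finset.mul_sum, Finset.sum_mul, mul_assoc]
  ring

theorem IsSymm.dotProduct_mulVec_eq_sq_add_schurComplementAtZero
    {M : Matrix (Fin (k + 1)) (Fin (k + 1)) K} (hM : M.IsSymm) (h0 : M 0 0 ≠ 0)
    (x : Fin (k + 1) → K) :
    x ⬝ᵥ M *ᵥ x = M 0 0 * (x 0 + (M 0 0)⁻¹ * (Fin.tail (M 0) ⬝ᵥ Fin.tail x)) ^ 2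
      + Fin.tail x ⬝ᵥ schurComplementAtZero M *ᵥ Fin.tail x := by
  rw [dotProduct_mulVec_fin_succ, schurComplementAtZero, hM.eq, sub_mulVec, smul_mulVec,
    vecMulVec_mulVec, dotProduct_sub, dotProduct_smul, dotProduct_smul, dotProduct_comm (Fin.tail x)]
  simp only [MulOpposite.smul_eq_mul_unop, MulOpposite.unop_op, smul_eq_mul]
  field_simp
  ring

theorem PosDef.of_schurComplementAtZero [LinearOrder K] [IsStrictOrderedRing K] [StarRing K]
    [TrivialStar K] {M : Matrix (Fin (k + 1)) (Fin (k + 1)) K} (hM : M.IsHermitian)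
    (h0 : 0 < M 0 0) (hS : (schurComplementAtZero M).PosDef) : M.PosDef := by
  refine .of_dotProduct_mulVec_pos hM fun x hx => ?_
  rw [star_trivial,
    (isHermitian_iff_isSymm.1 hM).dotProduct_mulVec_eq_sq_add_schurComplementAtZero h0.ne']
  by_cases htail : Fin.tail x = 0
  · have hx0 : x 0 ≠ 0 := fun h => hx (funext fun i => Fin.cases h (congrFun htail) i)
    have : 0 < x 0 ^ 2 := by positivity
    simpa [htail] using mul_pos h0 this
  · have hQ := hS.dotProduct_mulVec_pos htail
    rw [star_trivial] at hQ
    exact add_pos_of_nonneg_of_pos (by positivity) hQ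

end SchurComplement

end Matrix

theorem Dmat_isHermitian (n : ℕ) (a b : ℝ) : (Dmat n a b).IsHermitian := by
  ext i j
  rcases eq_or_ne i j with rfl | hij
  · simp [Dmat]
  · simp [Dmat, conjTranspose_apply, hij, hij.symm, or_comm]

theorem Dmat_one (a b : ℝ) : Dmat 1 a b = diagonal fun _ => a := by
  ext i j
  fin_cases i; fin_cases j
  simp [Dmat]

theorem Dmat_apply_zero_zero (n : ℕ) (a b : ℝ) : Dmat (n + 1) a b 0 0 = a := by
  simp [Dmat]

theorem schurComplementAtZero_Dmat_two (a b c : ℝ) :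
    schurComplementAtZero (Dmat 2 a b) = Dmat 1 (b - a⁻¹) c := by
  ext i j
  fin_cases i; fin_cases j
  simp [schurComplementAtZero, Dmat, Fin.tail, vecMulVec]

theorem schurComplementAtZero_Dmat_succ {n : ℕ} (hn : 2 ≤ n) (a b : ℝ) :
    schurComplementAtZero (Dmat (n + 1) a b) = Dmat n (2 - a⁻¹) b := by
  ext i j
  simp only [schurComplementAtZero, Matrix.sub_apply, Matrix.submatrix_apply, Matrix.smul_apply,
    vecMulVec_apply, transpose_apply, Fin.tail, Dmat, of_apply, Fin.ext_iff, Fin.val_succ,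
    Fin.val_zero, smul_eq_mul]
  split_ifs <;> first | ring1 | omega | simp_all

theorem posDef_Dmat_one {a : ℝ} (b : ℝ) (ha : 0 < a) : (Dmat 1 a b).PosDef := by
  rw [Dmat_one]
  exact posDef_diagonal_iff.2 fun _ => ha

theorem pos_and_one_lt_mul_two_sub_inv {t a b : ℝ} (ht : 2 ≤ t)
    (hα : 0 < t * a - (t - 1)) (hαβ : 1 < (t * a - (t - 1)) * (t * b - (t - 1))) :
    0 < a ∧ 0 < (t - 1) * (2 - a⁻¹) - (t - 2) ∧
      1 < ((t - 1) * (2 - a⁻¹) - (t - 2)) * ((t - 1) * b - (t - 2)) := by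
  have ha : 0 < a := by nlinarith
  have hα' : (t - 1) * (2 - a⁻¹) - (t - 2) = (t * a - (t - 1)) / a := by
    field_simp
    ring
  refine ⟨ha, hα' ▸ div_pos hα ha, ?_⟩
  rw [hα', div_mul_eq_mul_div, one_lt_div ha]
  nlinarith [mul_pos (by linarith : (0 : ℝ) < t - 1) (sub_pos.2 hαβ)]

theorem posDef_Dmat_of_one_lt_mul {n : ℕ} (hn : 2 ≤ n) {a b : ℝ}
    (hα : 0 < ((n : ℝ) - 1) * a - ((n : ℝ) - 2))
    (hαβ : 1 < (((n : ℝ) - 1) * a - ((n : ℝ) - 2)) * (((n : ℝ) - 1) * b - ((n : ℝ) - 2))) :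
    (Dmat n a b).PosDef := by
  induction n, hn using Nat.le_induction generalizing a with
  | base =>
    norm_num at hα hαβ
    refine .of_schurComplementAtZero (Dmat_isHermitian _ _ _) (by rwa [Dmat_apply_zero_zero]) ?_
    rw [schurComplementAtZero_Dmat_two _ _ b]
    exact posDef_Dmat_one _ (sub_pos.2 ((inv_lt_iff_one_lt_mul₀' hα).2 hαβ))
  | succ n hn ih =>
    push_cast at hα hαβ
    obtain ⟨ha, hα', hαβ'⟩ := pos_and_one_lt_mul_two_sub_inv (t := n) (a := a) (b := b)
      (by exact_mod_cast hn) (by linarith) (by convert hαβ using 2 <;> ring)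
    refine .of_schurComplementAtZero (Dmat_isHermitian _ _ _) (by rwa [Dmat_apply_zero_zero]) ?_
    rw [schurComplementAtZero_Dmat_succ hn]
    exact ih hα' hαβ'

theorem pos_and_one_lt_mul_of_lt_div {t a b : ℝ} (ht : 1 < t) (ha : (t - 2) / (t - 1) < a)
    (hb : (t - 2) / (t - 1) < b) (hab : ((t - 2) * b - (t - 3)) / ((t - 1) * b - (t - 2)) < a) :
    0 < (t - 1) * a - (t - 2) ∧ 1 < ((t - 1) * a - (t - 2)) * ((t - 1) * b - (t - 2)) := by
  rw [div_lt_iff₀ (by linarith)] at ha hb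
  rw [div_lt_iff₀ (by linarith)] at hab
  constructor <;> nlinarith

theorem stmt4_general (S : ℕ) (n : Fin S → ℕ) (a b : Fin S → ℝ)
    (h : ∀ k : Fin S,
      (n k = 1 ∧ 0 < a k) ∨
      (n k = 2 ∧ 0 < a k ∧ 1 < a k * b k) ∨
      (3 ≤ n k ∧ a k > ((n k : ℝ) - 2) / ((n k : ℝ) - 1) ∧
        b k > ((n k : ℝ) - 2) / ((n k : ℝ) - 1) ∧
        a k > (((n k : ℝ) - 2) * b k - ((n k : ℝ) - 3)) /
              (((n k : ℝ) - 1) * b k - ((n k : ℝ) - 2)))) :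
    (Matrix.blockDiagonal' (fun k : Fin S => Dmat (n k) (a k) (b k))).PosDef := by
  refine PosDef.blockDiagonal' fun k => ?_
  rcases h k with ⟨hn, ha⟩ | ⟨hn, ha, hab⟩ | ⟨hn, ha, hb, hab⟩
  · rw [hn]
    exact posDef_Dmat_one _ ha
  · refine posDef_Dmat_of_one_lt_mul hn.ge ?_ ?_ <;> norm_num [hn, ha, hab]
  · have ht : (1 : ℝ) < n k := by exact_mod_cast (by omega : 1 < n k)
    obtain ⟨hα, hαβ⟩ := pos_and_one_lt_mul_of_lt_div ht ha hb hab
    exact posDef_Dmat_of_one_lt_mul (by omega) hα hαβ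

theorem stmt4 (S : ℕ) (hS : 1 ≤ S) (n : Fin S → ℕ) (a b : Fin S → ℝ)
    (h : ∀ k : Fin S,
      (n k = 1 ∧ 0 < a k) ∨
      (n k = 2 ∧ 0 < a k ∧ 1 < a k * b k) ∨
      (3 ≤ n k ∧ a k > ((n k : ℝ) - 2) / ((n k : ℝ) - 1) ∧
        b k > ((n k : ℝ) - 2) / ((n k : ℝ) - 1) ∧
        a k > (((n k : ℝ) - 2) * b k - ((n k : ℝ) - 3)) /
              (((n k : ℝ) - 1) * b k - ((n k : ℝ) - 2)))) :
    (Matrix.blockDiagonal' (fun k : Fin S => Dmat (n k) (a k) (b k))).PosDef :=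
  stmt4_general S n a b h
end

section
/- Let n ≥ 4 be an integer and let a, b be real numbers with b > (n−2)/(n−1) and a > ((n−2)b − (n−3)) / ((n−1)b − (n−2)). Then a > 0, 0 < 1/a < ((n−1)b − (n−2)) / ((n−2)b − (n−3)), and 2 − 1/a > ((n−3)b − (n−4)) / ((n−2)b − (n−3)). -/
/-! The three quantities `(x - k) * b - (x - k - 1)` for `k = 1, 2, 3` form an arithmetic
progression in `k`, and the middle one is `((x - 2) · first + 1) / (x - 1)`, so it inherits
positivity from the first. Taking reciprocals in `a > B / A` gives `1 / a < A / B`, and the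
progression turns `2 - A / B` into `C / B`. -/

lemma sub_mul_sub_pos_of_div_lt {x b : ℝ} (hx : 1 < x) (hb : (x - 2) / (x - 1) < b) :
    0 < (x - 1) * b - (x - 2) := by
  rw [div_lt_iff₀ (by linarith)] at hb
  linarith

lemma sub_mul_sub_pos_of_pos_succ {x b : ℝ} (hx : 2 ≤ x) (h : 0 < (x - 1) * b - (x - 2)) :
    0 < (x - 2) * b - (x - 3) := by
  have hmul : (x - 1) * ((x - 2) * b - (x - 3)) = (x - 2) * ((x - 1) * b - (x - 2)) + 1 := by
    ring
  have : 0 < (x - 1) * ((x - 2) * b - (x - 3)) := by rw [hmul]; nlinarith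
  exact pos_of_mul_pos_right this (by linarith)

lemma div_eq_two_sub_div_of_ne_zero {x b : ℝ} (h : (x - 2) * b - (x - 3) ≠ 0) :
    ((x - 3) * b - (x - 4)) / ((x - 2) * b - (x - 3))
      = 2 - ((x - 1) * b - (x - 2)) / ((x - 2) * b - (x - 3)) := by
  rw [eq_sub_iff_add_eq, ← add_div, div_eq_iff h]
  ring

theorem stmt11 (n : ℕ) (hn : 4 ≤ n) (a b : ℝ)
    (hb : b > ((n : ℝ) - 2) / ((n : ℝ) - 1))
    (ha : a > (((n : ℝ) - 2) * b - ((n : ℝ) - 3)) / (((n : ℝ) - 1) * b - ((n : ℝ) - 2))) :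
    a > 0 ∧
    (0 < 1 / a ∧ 1 / a < (((n : ℝ) - 1) * b - ((n : ℝ) - 2)) / (((n : ℝ) - 2) * b - ((n : ℝ) - 3))) ∧
    2 - 1 / a > (((n : ℝ) - 3) * b - ((n : ℝ) - 4)) / (((n : ℝ) - 2) * b - ((n : ℝ) - 3)) := by
  have hx : (4 : ℝ) ≤ n := by exact_mod_cast hn
  have hA := sub_mul_sub_pos_of_div_lt (by linarith) hb
  have hB := sub_mul_sub_pos_of_pos_succ (by linarith) hA
  have hBA := div_pos hB hA
  have ha₀ : 0 < a := hBA.trans ha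
  have hinv := one_div_lt_one_div_of_lt hBA ha
  rw [one_div_div] at hinv
  refine ⟨ha₀, ⟨one_div_pos.2 ha₀, hinv⟩, ?_⟩
  rw [div_eq_two_sub_div_of_ne_zero hB.ne']
  linarith
end
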